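/- Let R be a *-ring and p, q projectors with pq = qp. Then p + q is Moore-Penrose invertible if and only if 1 + pq is Moore-Penrose invertible; in this case (p+q)† = (1+pq)†p + q(1-p) and (1+pq)† = (p+q)†p + 1 - p. -/

import Mathlib

/-- `b` is a Moore-Penrose inverse of `a`. -/
def IsMP {R : Type*} [Ring R] [StarRing R] (a b : R) : Prop :=
  a * b * a = a ∧ b * a * b = b ∧ star (a * b) = a * b ∧ star (b * a) = b * a

/-- `p` is a projector: `p² = p = p*`. -/
def IsProjector {R : Type*} [Ring R] [StarRing R] (p : R) : Prop :=
  p * p = p ∧ star p = p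

/-- `a` is *-cancellable. -/
def StarCancellable {R : Type*} [Ring R] [StarRing R] (a : R) : Prop :=
  (∀ x : R, star a * a * x = 0 → a * x = 0) ∧ (∀ x : R, x * (a * star a) = 0 → x * a = 0)

/-!
Along the splitting `1 = p + (1 - p)` one has `p + q = (1 + pq) p + q (1 - p)` and
`1 + pq = (p + q) p + 1 (1 - p)`. A Moore-Penrose inverse of `a p + c (1 - p)` is `b p + d (1 - p)`
whenever `b`, `d` are Moore-Penrose inverses of `a`, `c` and everything commutes with `p`.
Here `q` and `1` are their own inverses, and the inverses of the self-adjoint elements `1 + pq`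
and `p + q` are group inverses, hence commute with `p` as `1 + pq` and `p + q` do.
-/

theorem commute_groupInverse_of_commute {M : Type*} [Monoid M] {a b x : M}
    (h₁ : a * b * a = a) (h₂ : b * a * b = b) (hab : Commute a b) (hx : Commute x a) :
    Commute x b := by
  have ha : ∀ z, a * (b * (a * z)) = a * z := fun z => by rw [← mul_assoc, ← mul_assoc, h₁]
  have hb : ∀ z, b * (b * (a * z)) = b * z := fun z => by
    rw [← mul_assoc, ← mul_assoc, mul_assoc b, ← hab.eq, ← mul_assoc, h₂]
  have hb' : a * (b * b) = b := by rw [← mul_assoc, hab.eq, h₂]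
  -- with `e = ab = ba`: `xb = e (xb) = (bx) e = bx`
  calc x * b = x * (a * (b * b)) := by rw [hb']
    _ = a * (b * (a * (x * (b * b)))) := by rw [ha, hx.left_comm]
    _ = a * (b * (x * b)) := by rw [← hx.left_comm, hb']
    _ = b * (x * (a * b)) := by rw [hab.left_comm, hx.left_comm]
    _ = b * (b * (a * (x * (b * a)))) := by rw [hb, hab.eq]
    _ = b * (b * (a * x)) := by rw [← hx.left_comm, ← mul_assoc a b a, h₁, hx.eq]
    _ = b * x := hb x

section

variable {R : Type*} [Ring R]

theorem peirce_mul {e u v u' v' : R} (he : IsIdempotentElem e) (hu' : Commute e u')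
    (hv' : Commute e v') :
    (u * e + v * (1 - e)) * (u' * e + v' * (1 - e)) = u * u' * e + v * v' * (1 - e) := by
  have swap : ∀ {f w : R} (x g : R), Commute f w → x * f * (w * g) = x * w * (f * g) := by
    intro f w x g h
    simp only [mul_assoc]
    rw [h.left_comm]
  rw [add_mul, mul_add, mul_add, swap _ _ hu', swap _ _ hv',
    swap _ _ ((Commute.one_left u').sub_left hu'), swap _ _ ((Commute.one_left v').sub_left hv'),
    he.eq, he.mul_one_sub_self, he.one_sub_mul_self, he.one_sub.eq, mul_zero, mul_zero, add_zero,
    zero_add]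

variable [StarRing R]

theorem IsProjector.isSelfAdjoint {p : R} (hp : IsProjector p) : IsSelfAdjoint p := hp.2

theorem IsProjector.isMP_self {p : R} (hp : IsProjector p) : IsMP p p := by
  obtain ⟨hpp, hps⟩ := hp
  exact ⟨by rw [hpp, hpp], by rw [hpp, hpp], by rw [hpp, hps], by rw [hpp, hps]⟩

theorem IsProjector.one : IsProjector (1 : R) := ⟨one_mul 1, star_one R⟩

namespace IsMP

variable {a b c : R}

protected theorem star (h : IsMP a b) : IsMP (star a) (star b) := by
  obtain ⟨h₁, h₂, h₃, h₄⟩ := h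
  refine ⟨?_, ?_, ?_, ?_⟩
  · rw [← star_mul, ← star_mul, ← mul_assoc, h₁]
  · rw [← star_mul, ← star_mul, ← mul_assoc, h₂]
  · rw [← star_mul, star_star, h₄]
  · rw [← star_mul, star_star, h₃]

theorem unique (hb : IsMP a b) (hc : IsMP a c) : b = c := by
  obtain ⟨hb₁, hb₂, hb₃, hb₄⟩ := hb
  obtain ⟨hc₁, hc₂, hc₃, hc₄⟩ := hc
  have hl : a * b = a * c :=
    calc a * b = star (a * c) * star (a * b) := by rw [hc₃, hb₃, ← mul_assoc, hc₁]
      _ = a * c := by rw [← star_mul, ← mul_assoc, hb₁, hc₃]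
  have hr : b * a = c * a :=
    calc b * a = star (b * a) * star (c * a) := by
          rw [hb₄, hc₄, ← mul_assoc, mul_assoc b a c, mul_assoc b (a * c), hc₁]
      _ = c * a := by rw [← star_mul, mul_assoc, ← mul_assoc a, hb₁, hc₄]
  rw [← hb₂, hr, mul_assoc, hl, ← mul_assoc, hc₂]

theorem isSelfAdjoint (ha : IsSelfAdjoint a) (h : IsMP a b) : IsSelfAdjoint b :=
  (ha.star_eq ▸ h.star).unique h

theorem commute_of_isSelfAdjoint (ha : IsSelfAdjoint a) (h : IsMP a b) : Commute a b := by
  rw [commute_iff_eq, ← h.2.2.1, star_mul, ha.star_eq, (h.isSelfAdjoint ha).star_eq]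

theorem commute_of_commute (ha : IsSelfAdjoint a) (h : IsMP a b) {x : R} (hx : Commute x a) :
    Commute x b :=
  commute_groupInverse_of_commute h.1 h.2.1 (h.commute_of_isSelfAdjoint ha) hx

theorem peirce {d e : R} (he : IsProjector e) (ha : Commute e a) (hb : Commute e b)
    (hc : Commute e c) (hd : Commute e d) (hab : IsMP a b) (hcd : IsMP c d) :
    IsMP (a * e + c * (1 - e)) (b * e + d * (1 - e)) := by
  have he₁ : IsIdempotentElem e := he.1
  have he₂ := he.isSelfAdjoint
  have hsa : ∀ {w w' : R}, IsSelfAdjoint w → IsSelfAdjoint w' → Commute e w →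
      Commute e w' → IsSelfAdjoint (w * e + w' * (1 - e)) := fun hw hw' h h' =>
    ((hw.commute_iff he₂).mp h.symm).add <|
      (hw'.commute_iff ((IsSelfAdjoint.one R).sub he₂)).mp ((Commute.one_left _).sub_left h').symm
  refine ⟨?_, ?_, ?_, ?_⟩
  · rw [peirce_mul he₁ hb hd, peirce_mul he₁ ha hc, hab.1, hcd.1]
  · rw [peirce_mul he₁ ha hc, peirce_mul he₁ hb hd, hab.2.1, hcd.2.1]
  · rw [peirce_mul he₁ hb hd]
    exact hsa hab.2.2.1 hcd.2.2.1 (ha.mul_right hb) (hc.mul_right hd)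
  · rw [peirce_mul he₁ ha hc]
    exact hsa hab.2.2.2 hcd.2.2.2 (hb.mul_right ha) (hd.mul_right hc)

end IsMP

end

theorem stmt16 {R : Type*} [Ring R] [StarRing R] (p q : R)
    (hp : IsProjector p) (hq : IsProjector q)
    (hcomm : p * q = q * p) :
    ((∃ x, IsMP (p + q) x) ↔ (∃ x, IsMP (1 + p * q) x)) ∧
    (∀ y, IsMP (1 + p * q) y → IsMP (p + q) (y * p + q * (1 - p))) ∧
    (∀ x, IsMP (p + q) x → IsMP (1 + p * q) (x * p + 1 - p)) := by
  have hpq : Commute p q := hcomm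
  have hsa₁ : IsSelfAdjoint (1 + p * q) := (IsSelfAdjoint.one R).add
    ((hp.isSelfAdjoint.commute_iff hq.isSelfAdjoint).mp hpq)
  have hsa₂ : IsSelfAdjoint (p + q) := hp.isSelfAdjoint.add hq.isSelfAdjoint
  have hc₁ : Commute p (1 + p * q) :=
    (Commute.one_right p).add_right ((Commute.refl p).mul_right hpq)
  have hc₂ : Commute p (p + q) := (Commute.refl p).add_right hpq
  have hsplit₁ : (1 + p * q) * p + q * (1 - p) = p + q := by
    rw [add_mul, one_mul, mul_assoc, ← hcomm, ← mul_assoc, hp.1, mul_sub, mul_one, ← hcomm]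
    abel
  have hsplit₂ : (p + q) * p + 1 * (1 - p) = 1 + p * q := by
    rw [add_mul, hp.1, one_mul, ← hcomm]
    abel
  have to_add : ∀ y, IsMP (1 + p * q) y → IsMP (p + q) (y * p + q * (1 - p)) := fun y hy => by
    rw [← hsplit₁]
    exact hy.peirce hp hc₁ (hy.commute_of_commute hsa₁ hc₁) hpq hpq hq.isMP_self
  have to_one_add : ∀ x, IsMP (p + q) x → IsMP (1 + p * q) (x * p + 1 - p) := fun x hx => by
    have h := hx.peirce hp hc₂ (hx.commute_of_commute hsa₂ hc₂) (Commute.one_right p)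
      (Commute.one_right p) IsProjector.one.isMP_self
    rwa [hsplit₂, one_mul, ← add_sub_assoc] at h
  exact ⟨⟨fun ⟨x, hx⟩ => ⟨_, to_one_add x hx⟩, fun ⟨y, hy⟩ => ⟨_, to_add y hy⟩⟩,
    to_add, to_one_add⟩
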